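/- arXiv:2110.06850 — 9 statements merged into one kernel-verified Lean document; each statement's English description precedes it below -/
import Mathlib

section
/- Let g : ℝ^d → ℝ^K (K ≥ 2) satisfy ‖g(x) − g(x')‖∞ ≤ ‖x − x'‖∞ for all x, x', let θ > 0, and let D = {(x_i, y_i)}_{i=1}^n be a finite labeled dataset with y_i ∈ [K]. If the hinge loss L_hinge(g, D; θ) = (1/n) Σ_{i=1}^n max{θ − margin(x_i, y_i; g), 0} equals 0, then for every i ∈ [n], every δ ∈ ℝ^d with ‖δ‖∞ < θ/2, and every j ≠ y_i, one has g(x_i+δ)_{y_i} > g(x_i+δ)_j; i.e. zero hinge loss implies the network robustly classifies every training point under all ℓ∞-perturbations of size strictly less than θ/2. -/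
/-!
A margin of at least `θ` at `x` means every wrong logit trails the correct one by `θ`. A
perturbation of size `< θ/2` moves each logit by less than `θ/2`, since the ℓ∞ norm bounds
every coordinate, so the gap can shrink by less than `θ` and stays positive.
-/

open Finset

section Margin

variable {ι : Type*} [Fintype ι] [DecidableEq ι]

def margin (v : ι → ℝ) (k : ι) (h : (univ.erase k).Nonempty) : ℝ :=
  v k - (univ.erase k).sup' h v

lemma margin_le_sub (v : ι → ℝ) {k j : ι} (h : (univ.erase k).Nonempty) (hj : j ≠ k) :
    margin v k h ≤ v k - v j :=
  sub_le_sub_left (le_sup' v (mem_erase.mpr ⟨hj, mem_univ j⟩)) _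

lemma lt_apply_of_norm_sub_lt_of_le_margin {v w : ι → ℝ} {k j : ι} {θ : ℝ}
    (h : (univ.erase k).Nonempty) (hmargin : θ ≤ margin v k h) (hvw : ‖w - v‖ < θ / 2)
    (hj : j ≠ k) : w j < w k := by
  have hcoord (l : ι) : |w l - v l| < θ / 2 := (norm_le_pi_norm (w - v) l).trans_lt hvw
  have hk := abs_lt.mp (hcoord k)
  have hj' := abs_lt.mp (hcoord j)
  linarith [margin_le_sub v h hj]

end Margin

lemma le_zero_of_sum_max_zero_eq_zero {ι : Type*} {s : Finset ι} {a : ι → ℝ}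
    (h : ∑ i ∈ s, max (a i) 0 = 0) {i : ι} (hi : i ∈ s) : a i ≤ 0 :=
  max_eq_right_iff.mp <| (sum_eq_zero_iff_of_nonneg fun _ _ => le_max_right _ _).mp h i hi

theorem zero_hinge_loss_certified_robustness_general
    (d K n : ℕ)
    (g : (Fin d → ℝ) → (Fin K → ℝ))
    (hg : ∀ x x' : Fin d → ℝ, ‖g x - g x'‖ ≤ ‖x - x'‖)
    (θ : ℝ)
    (x : Fin n → (Fin d → ℝ)) (y : Fin n → Fin K)
    (hne : ∀ i : Fin n, ((Finset.univ : Finset (Fin K)).erase (y i)).Nonempty)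
    (hloss : (1 / (n : ℝ)) * ∑ i : Fin n,
        max (θ - (g (x i) (y i) -
          ((Finset.univ : Finset (Fin K)).erase (y i)).sup' (hne i) (g (x i)))) 0 = 0) :
    ∀ i : Fin n, ∀ δ : Fin d → ℝ, ‖δ‖ < θ / 2 → ∀ j : Fin K, j ≠ y i →
      g (x i + δ) (y i) > g (x i + δ) j := by
  intro i δ hδ j hj
  have hn : (1 / (n : ℝ)) ≠ 0 := one_div_ne_zero (Nat.cast_ne_zero.mpr (Fin.pos i).ne')
  have hmargin : θ ≤ margin (g (x i)) (y i) (hne i) :=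
    sub_nonpos.mp <| le_zero_of_sum_max_zero_eq_zero ((mul_eq_zero.mp hloss).resolve_left hn)
      (mem_univ i)
  have hlip : ‖g (x i + δ) - g (x i)‖ < θ / 2 :=
    (hg _ _).trans_lt (by rwa [add_sub_cancel_left])
  exact lt_apply_of_norm_sub_lt_of_le_margin (hne i) hmargin hlip hj

/-- Zero hinge loss implies perfect certified robustness: if `g` is 1-Lipschitz w.r.t. the
ℓ∞-norm and the hinge loss `(1/n) Σᵢ max{θ - margin(xᵢ, yᵢ; g), 0}` equals `0`, then every
training point is robustly classified under all ℓ∞-perturbations of size `< θ/2`. -/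
theorem zero_hinge_loss_certified_robustness
    (d K n : ℕ) (hK : 2 ≤ K) (hn : 1 ≤ n)
    (g : (Fin d → ℝ) → (Fin K → ℝ))
    (hg : ∀ x x' : Fin d → ℝ, ‖g x - g x'‖ ≤ ‖x - x'‖)
    (θ : ℝ) (hθ : 0 < θ)
    (x : Fin n → (Fin d → ℝ)) (y : Fin n → Fin K)
    (hne : ∀ i : Fin n, ((Finset.univ : Finset (Fin K)).erase (y i)).Nonempty)
    (hloss : (1 / (n : ℝ)) * ∑ i : Fin n,
        max (θ - (g (x i) (y i) -
          ((Finset.univ : Finset (Fin K)).erase (y i)).sup' (hne i) (g (x i)))) 0 = 0) :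
    ∀ i : Fin n, ∀ δ : Fin d → ℝ, ‖δ‖ < θ / 2 → ∀ j : Fin K, j ≠ y i →
      g (x i + δ) (y i) > g (x i + δ) j :=
  zero_hinge_loss_certified_robustness_general d K n g hg θ x y hne hloss
end

section
/- Let p ∈ [1, ∞), d ≥ 1, L ≥ 1, and let g = F_L ∘ ⋯ ∘ F_1 : ℝ^{n_0} → ℝ^{n_L} where each F_l : ℝ^{n_{l−1}} → ℝ^{n_l} is an ℓp-distance layer F_l(z)_i = ‖z − w^(l,i)‖_p + b^(l)_i, and suppose the input dimension of every layer satisfies n_{l−1} ≤ d for all l ∈ [L]. Then g is d^{L/p}-Lipschitz with respect to the ℓ∞-norm: for all x, x' ∈ ℝ^{n_0}, ‖g(x) − g(x')‖∞ ≤ d^{L/p} ‖x − x'‖∞. -/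
/-!
Each layer is `d^(1/p)`-Lipschitz for the sup norm: its `i`-th coordinate is the ℓp distance to
`w^(i)` plus a constant, which is 1-Lipschitz for the ℓp norm by the triangle inequality, and
`‖z‖_p ≤ n^(1/p) ‖z‖_∞` on `ℝ^n`. Composing `L` layers multiplies the constants.
-/

/-- The composition of the first `L` layers of a network: `netComp n F L = F_{L-1} ∘ ⋯ ∘ F_0`,
where layer `F_l` maps `ℝ^{n l}` to `ℝ^{n (l+1)}`. -/
def netComp (n : ℕ → ℕ) (F : ∀ l : ℕ, (Fin (n l) → ℝ) → (Fin (n (l + 1)) → ℝ)) :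
    (L : ℕ) → (Fin (n 0) → ℝ) → (Fin (n L) → ℝ)
  | 0 => id
  | (L + 1) => fun x => F L (netComp n F L x)

open NNReal

theorem LipschitzWith.pi {α ι : Type*} {β : ι → Type*} [PseudoEMetricSpace α] [Fintype ι]
    [∀ i, PseudoEMetricSpace (β i)] {K : ℝ≥0} {f : α → ∀ i, β i}
    (hf : ∀ i, LipschitzWith K fun x => f x i) : LipschitzWith K f :=
  fun x y => edist_pi_le_iff.2 fun i => hf i x y

theorem netComp_lipschitzWith {n : ℕ → ℕ}
    {F : ∀ l : ℕ, (Fin (n l) → ℝ) → (Fin (n (l + 1)) → ℝ)} {K : ℝ≥0} {L : ℕ}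
    (hF : ∀ l < L, LipschitzWith K (F l)) :
    LipschitzWith (K ^ L) (netComp n F L) := by
  induction L with
  | zero => exact LipschitzWith.id
  | succ L ih =>
    rw [pow_succ']
    exact (hF L L.lt_succ_self).comp (ih fun l hl => hF l (hl.trans L.lt_succ_self))

section LpDistLayer

variable {ι κ : Type*} [Fintype ι]

noncomputable def lpDistLayer (p : ℝ) (w : κ → ι → ℝ) (b : κ → ℝ) (z : ι → ℝ) :
    κ → ℝ :=
  fun i => (∑ k, |z k - w i k| ^ p) ^ (1 / p) + b i

theorem lpDist_eq_dist_toLp {p : ℝ} (hp : 0 < p) (z w : ι → ℝ) :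
    (∑ k, |z k - w k| ^ p) ^ (1 / p) =
      dist (WithLp.toLp (ENNReal.ofReal p) z) (WithLp.toLp (ENNReal.ofReal p) w) := by
  rw [PiLp.dist_eq_sum (by rwa [ENNReal.toReal_ofReal hp.le])]
  simp [ENNReal.toReal_ofReal hp.le, Real.dist_eq]

theorem lipschitzWith_lpDist {p : ℝ} (hp : 1 ≤ p) (w : ι → ℝ) :
    LipschitzWith ((Fintype.card ι : ℝ≥0) ^ (1 / p))
      fun z : ι → ℝ => (∑ k, |z k - w k| ^ p) ^ (1 / p) := by
  have : Fact (1 ≤ ENNReal.ofReal p) := ⟨by simpa using hp⟩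
  have hp0 : 0 < p := zero_lt_one.trans_le hp
  simp_rw [lpDist_eq_dist_toLp hp0]
  have := (LipschitzWith.dist_left (WithLp.toLp (ENNReal.ofReal p) w)).comp
    (PiLp.lipschitzWith_toLp (ENNReal.ofReal p) fun _ : ι => ℝ)
  simpa [ENNReal.toReal_ofReal hp0.le, Function.comp_def] using this

theorem lipschitzWith_lpDistLayer [Fintype κ] {p : ℝ} (hp : 1 ≤ p) (w : κ → ι → ℝ)
    (b : κ → ℝ) :
    LipschitzWith ((Fintype.card ι : ℝ≥0) ^ (1 / p)) (lpDistLayer p w b) :=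
  LipschitzWith.pi fun i => by
    simpa [lpDistLayer] using (lipschitzWith_lpDist hp (w i)).add (LipschitzWith.const (b i))

end LpDistLayer

theorem lp_dist_net_lipschitz_general
    (p : ℝ) (hp : 1 ≤ p)
    (d : ℕ)
    (L : ℕ)
    (n : ℕ → ℕ) (hdim : ∀ l, l < L → n l ≤ d)
    (F : ∀ l : ℕ, (Fin (n l) → ℝ) → (Fin (n (l + 1)) → ℝ))
    (hF : ∀ l, l < L → ∃ (w : Fin (n (l + 1)) → (Fin (n l) → ℝ)) (b : Fin (n (l + 1)) → ℝ),
        ∀ (z : Fin (n l) → ℝ) (i : Fin (n (l + 1))),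
          F l z i = (∑ k : Fin (n l), |z k - w i k| ^ p) ^ (1 / p) + b i) :
    ∀ x x' : Fin (n 0) → ℝ,
      ‖netComp n F L x - netComp n F L x'‖ ≤ (d : ℝ) ^ ((L : ℝ) / p) * ‖x - x'‖ := by
  have hlayer : ∀ l < L, LipschitzWith ((d : ℝ≥0) ^ (1 / p)) (F l) := fun l hl => by
    obtain ⟨w, b, hwb⟩ := hF l hl
    have hFl : F l = lpDistLayer p w b := funext fun z => funext (hwb z)
    rw [hFl]
    refine (lipschitzWith_lpDistLayer hp w b).weaken (NNReal.rpow_le_rpow ?_ (by positivity))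
    exact_mod_cast (Fintype.card_fin _).trans_le (hdim l hl)
  intro x x'
  have hconst : (((d : ℝ≥0) ^ (1 / p)) ^ L : ℝ≥0) = (d : ℝ) ^ ((L : ℝ) / p) := by
    rw [NNReal.coe_pow, NNReal.coe_rpow, ← Real.rpow_natCast, ← Real.rpow_mul (by positivity)]
    simp [div_eq_inv_mul]
  have := (netComp_lipschitzWith hlayer).dist_le_mul x x'
  rwa [hconst, dist_eq_norm, dist_eq_norm] at this

/-- Proposition 2 (net part): an `L`-layer ℓp-distance net `g = F_L ∘ ⋯ ∘ F_1`, where each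
layer `F_l(z)_i = ‖z - w^(l,i)‖_p + b^(l)_i` (with `‖z‖_p = (Σ_k |z_k|^p)^(1/p)`) has input
dimension at most `d`, is `d^(L/p)`-Lipschitz with respect to the ℓ∞-norm. -/
theorem lp_dist_net_lipschitz
    (p : ℝ) (hp : 1 ≤ p)
    (d : ℕ) (hd : 1 ≤ d)
    (L : ℕ) (hL : 1 ≤ L)
    (n : ℕ → ℕ) (hdim : ∀ l, l < L → n l ≤ d)
    (F : ∀ l : ℕ, (Fin (n l) → ℝ) → (Fin (n (l + 1)) → ℝ))
    (hF : ∀ l, l < L → ∃ (w : Fin (n (l + 1)) → (Fin (n l) → ℝ)) (b : Fin (n (l + 1)) → ℝ),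
        ∀ (z : Fin (n l) → ℝ) (i : Fin (n (l + 1))),
          F l z i = (∑ k : Fin (n l), |z k - w i k| ^ p) ^ (1 / p) + b i) :
    ∀ x x' : Fin (n 0) → ℝ,
      ‖netComp n F L x - netComp n F L x'‖ ≤ (d : ℝ) ^ ((L : ℝ) / p) * ‖x - x'‖ :=
  lp_dist_net_lipschitz_general p hp d L n hdim F hF
end

section
/- Let r ≥ 0, let f : ℝ^d → [K] be any classifier, and let D = {(x_i, y_i)}_{i=1}^n be a labeled dataset with y_i ∈ [K] such that f is robustly correct on D at level r, i.e. for every i ∈ [n] and every δ ∈ ℝ^d with ‖δ‖∞ ≤ r one has f(x_i + δ) = y_i. Then D is r-separated with respect to the ℓ∞-norm: for all i, j ∈ [n] with y_i ≠ y_j, ‖x_i − x_j‖∞ > 2r. -/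
open Metric

section

variable {E β : Type*} [SeminormedAddCommGroup E] {a b : E} {r : ℝ}

theorem forall_mem_closedBall_of_forall_norm_le {f : E → β} {u : β}
    (h : ∀ δ : E, ‖δ‖ ≤ r → f (a + δ) = u) : ∀ z ∈ closedBall a r, f z = u := fun z hz => by
  simpa using h (z - a) (mem_closedBall_iff_norm.1 hz)

variable [NormedSpace ℝ E]

theorem midpoint_mem_closedBall_inter (hab : dist a b ≤ 2 * r) :
    midpoint ℝ a b ∈ closedBall a r ∩ closedBall b r := by
  have half_le : ‖(2 : ℝ)‖⁻¹ * dist a b ≤ r := by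
    rw [Real.norm_two]
    linarith
  constructor
  · rw [mem_closedBall, dist_midpoint_left]
    exact half_le
  · rw [mem_closedBall, dist_midpoint_right]
    exact half_le

theorem eq_of_eqOn_closedBall_of_dist_le {f : E → β} {u v : β}
    (hu : ∀ z ∈ closedBall a r, f z = u) (hv : ∀ z ∈ closedBall b r, f z = v)
    (hab : dist a b ≤ 2 * r) : u = v := by
  obtain ⟨hma, hmb⟩ := midpoint_mem_closedBall_inter hab
  rw [← hu _ hma, hv _ hmb]

end

theorem robustness_implies_r_separation_general
    (d K n : ℕ) (r : ℝ)
    (f : (Fin d → ℝ) → Fin K)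
    (x : Fin n → (Fin d → ℝ)) (y : Fin n → Fin K)
    (hrob : ∀ i : Fin n, ∀ δ : Fin d → ℝ, ‖δ‖ ≤ r → f (x i + δ) = y i) :
    ∀ i j : Fin n, y i ≠ y j → ‖x i - x j‖ > 2 * r := by
  intro i j hy
  by_contra! hclose
  exact hy <| eq_of_eqOn_closedBall_of_dist_le
    (forall_mem_closedBall_of_forall_norm_le (hrob i))
    (forall_mem_closedBall_of_forall_norm_le (hrob j)) (by rwa [dist_eq_norm])

/-- r-separation is a necessary condition for robustness: if a classifier `f` is robustly
correct on the dataset at level `r` (i.e. `f(xᵢ + δ) = yᵢ` for all `‖δ‖∞ ≤ r`), then the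
dataset is r-separated w.r.t. the ℓ∞-norm: `‖xᵢ - xⱼ‖∞ > 2r` whenever `yᵢ ≠ yⱼ`. -/
theorem robustness_implies_r_separation
    (d K n : ℕ) (r : ℝ) (hr : 0 ≤ r)
    (f : (Fin d → ℝ) → Fin K)
    (x : Fin n → (Fin d → ℝ)) (y : Fin n → Fin K)
    (hrob : ∀ i : Fin n, ∀ δ : Fin d → ℝ, ‖δ‖ ≤ r → f (x i + δ) = y i) :
    ∀ i j : Fin n, y i ≠ y j → ‖x i - x j‖ > 2 * r :=
  robustness_implies_r_separation_general d K n r f x y hrob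
end

section
/- Let x_1, …, x_n ∈ ℝ^d with labels y_1, …, y_n ∈ [K], let C > 0, and define the two-layer ℓ∞-distance net g : ℝ^d → ℝ^K with first-layer parameters w^(1,i) = x_i, b^(1) = 0 and second-layer parameters w^(2,j)_i = C·𝟙[y_i = j], b^(2)_j = −C, i.e. g(x)_j = max_{i∈[n]} | ‖x − x_i‖∞ − C·𝟙[y_i = j] | − C. Then for every label j ∈ [K] for which some sample has y_i = j, and every x ∈ ℝ^d satisfying ‖x − x_i‖∞ ≤ C/2 for all i ∈ [n], one has g(x)_j = − min_{i : y_i = j} ‖x − x_i‖∞. -/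
/-!
When every sample lies within `C/2` of `z`, a sample of class `j` contributes
`|‖z - xᵢ‖ - C| = C - ‖z - xᵢ‖` to the maximum and any other sample contributes
`‖z - xᵢ‖ ≤ C/2 ≤ C - min`, so the maximum is `C` minus the nearest in-class distance.
-/

open Finset

theorem Finset.sup'_univ_abs_sub_ite_eq_sub_ciInf {ι : Type*} [Fintype ι] (p : ι → Prop)
    [DecidablePred p] [Nonempty {i // p i}] (r : ι → ℝ) {C : ℝ}
    (hr₀ : ∀ i, 0 ≤ r i) (hrC : ∀ i, r i ≤ C / 2) (h : (univ : Finset ι).Nonempty) :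
    univ.sup' h (fun i => |r i - if p i then C else 0|) = C - ⨅ i : {i // p i}, r i := by
  obtain ⟨⟨i₀, hi₀⟩, hm⟩ := exists_eq_ciInf_of_finite (f := fun i : {i // p i} => r i)
  set m := ⨅ i : {i // p i}, r i
  have hm_le : ∀ i, p i → m ≤ r i := fun i hi =>
    ciInf_le (Finite.bddBelow_range _) (⟨i, hi⟩ : {i // p i})
  have hmC : m ≤ C / 2 := hm ▸ hrC i₀
  apply le_antisymm
  · refine sup'_le _ _ fun i _ => abs_le.2 ?_
    split_ifs with hi
    · constructor <;> linarith [hr₀ i, hrC i, hm_le i hi]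
    · constructor <;> linarith [hr₀ i, hrC i]
  · calc C - m = -(r i₀ - if p i₀ then C else 0) := by rw [if_pos hi₀, ← hm]; ring
      _ ≤ |r i₀ - if p i₀ then C else 0| := neg_le_abs _
      _ ≤ _ := le_sup' (fun i => |r i - if p i then C else 0|) (mem_univ i₀)

theorem two_layer_net_is_nearest_neighbor_general
    (d K n : ℕ) (hn : 1 ≤ n)
    (x : Fin n → (Fin d → ℝ)) (y : Fin n → Fin K)
    (C : ℝ)
    (g : (Fin d → ℝ) → (Fin K → ℝ))
    (hg : ∀ (z : Fin d → ℝ) (j : Fin K),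
        g z j = (Finset.univ : Finset (Fin n)).sup' ⟨⟨0, hn⟩, Finset.mem_univ _⟩
          (fun i => |‖z - x i‖ - (if y i = j then C else 0)|) - C) :
    ∀ j : Fin K, (∃ i : Fin n, y i = j) →
      ∀ z : Fin d → ℝ, (∀ i : Fin n, ‖z - x i‖ ≤ C / 2) →
        g z j = -(⨅ i : {i : Fin n // y i = j}, ‖z - x i.1‖) := by
  rintro j ⟨i₀, hi₀⟩ z hz
  have : Nonempty {i // y i = j} := ⟨⟨i₀, hi₀⟩⟩
  rw [hg, sup'_univ_abs_sub_ite_eq_sub_ciInf (fun i => y i = j) (fun i => ‖z - x i‖)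
    (fun _ => norm_nonneg _) hz ⟨⟨0, hn⟩, mem_univ _⟩]
  ring

/-- Equation (6) of the paper: the explicitly constructed two-layer ℓ∞-distance net
`g(x)_j = max_{i∈[n]} | ‖x - xᵢ‖∞ - C·𝟙[yᵢ = j] | - C` outputs the negative
nearest-neighbor ℓ∞-distance to class `j`, for every `x` with `‖x - xᵢ‖∞ ≤ C/2` for all `i`
and every label `j` attained by some sample. -/
theorem two_layer_net_is_nearest_neighbor
    (d K n : ℕ) (hn : 1 ≤ n)
    (x : Fin n → (Fin d → ℝ)) (y : Fin n → Fin K)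
    (C : ℝ) (hC : 0 < C)
    (g : (Fin d → ℝ) → (Fin K → ℝ))
    (hg : ∀ (z : Fin d → ℝ) (j : Fin K),
        g z j = (Finset.univ : Finset (Fin n)).sup' ⟨⟨0, hn⟩, Finset.mem_univ _⟩
          (fun i => |‖z - x i‖ - (if y i = j then C else 0)|) - C) :
    ∀ j : Fin K, (∃ i : Fin n, y i = j) →
      ∀ z : Fin d → ℝ, (∀ i : Fin n, ‖z - x i‖ ≤ C / 2) →
        g z j = -(⨅ i : {i : Fin n // y i = j}, ‖z - x i.1‖) :=
  two_layer_net_is_nearest_neighbor_general d K n hn x y C g hg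
end

section
/- Let r ≥ 0, K ≥ 1, and let D = {(x_i, y_i)}_{i=1}^n (n ≥ 1, x_i ∈ ℝ^d, y_i ∈ [K]) be r-separated with respect to the ℓ∞-norm, with every label in [K] attained by some sample. Then there exist first-layer parameters w^(1,1), …, w^(1,n) ∈ ℝ^d, b^(1) ∈ ℝ^n and second-layer parameters w^(2,1), …, w^(2,K) ∈ ℝ^n, b^(2) ∈ ℝ^K such that the two-layer ℓ∞-distance net g : ℝ^d → ℝ^K with hidden width n, g(x)_j = ‖(‖x − w^(1,i)‖∞ + b^(1)_i)_{i∈[n]} − w^(2,j)‖∞ + b^(2)_j, satisfies: for every k ∈ [n], every δ ∈ ℝ^d with ‖δ‖∞ ≤ r, and every j ≠ y_k, g(x_k + δ)_{y_k} > g(x_k + δ)_j. In particular such a net achieves 100% certified ℓ∞ robust accuracy on D under perturbation level ε = r. -/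
/-!
Take the samples themselves as first-layer centres with zero bias, so the hidden unit `i` reports
the distance `‖z - x i‖`. The output unit for label `j` subtracts a large constant `C` exactly
on the samples of class `j`. At `z = x k + δ` the hidden unit `k` is at most `r`, so the correct
output is at least `C - r`; every sample of another class lies at distance more than `r` from `z`
by separation, and every hidden unit is at most `diam + r`, so for `C > diam + 2 r` each
coordinate of a wrong output stays strictly below `C - r`.
-/

open Metric Set

namespace LinfDistNet

variable {ι κ E : Type*}

def classWeight [DecidableEq κ] (y : ι → κ) (C : ℝ) (j : κ) : ι → ℝ := fun i =>
  if y i = j then C else 0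

section Output

variable [Fintype ι] [DecidableEq κ] {h : ι → ℝ} {y : ι → κ} {r C : ℝ}

lemma sub_le_norm_sub_classWeight {k : ι} (hk : h k ≤ r) :
    C - r ≤ ‖h - classWeight y C (y k)‖ :=
  calc C - r ≤ |h k - C| := by rw [abs_sub_comm]; linarith [le_abs_self (C - h k)]
    _ = ‖(h - classWeight y C (y k)) k‖ := by simp [classWeight, Real.norm_eq_abs]
    _ ≤ ‖h - classWeight y C (y k)‖ := norm_le_pi_norm _ k

lemma norm_sub_classWeight_lt {M : ℝ} {j : κ} (hr : 0 ≤ r) (hM : 0 ≤ M) (hMC : M + r < C)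
    (h_nonneg : ∀ i, 0 ≤ h i) (h_le : ∀ i, h i ≤ M) (h_far : ∀ i, y i = j → r < h i) :
    ‖h - classWeight y C j‖ < C - r := by
  refine (pi_norm_lt_iff (by linarith)).2 fun i => ?_
  rw [Pi.sub_apply, Real.norm_eq_abs, classWeight]
  split_ifs with hi
  · have := h_far i hi
    have := h_le i
    rw [abs_lt]
    constructor <;> linarith
  · rw [sub_zero, abs_of_nonneg (h_nonneg i)]
    linarith [h_le i]

end Output

section Features

variable [SeminormedAddCommGroup E]

def distFeatures (w : ι → E) (z : E) : ι → ℝ := fun i => ‖z - w i‖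

variable {x : ι → E} {k : ι} {δ : E}

lemma distFeatures_add_self : distFeatures x (x k + δ) k = ‖δ‖ := by
  simp [distFeatures]

lemma distFeatures_add_le [Finite ι] (i : ι) :
    distFeatures x (x k + δ) i ≤ diam (range x) + ‖δ‖ :=
  calc ‖x k + δ - x i‖ = ‖(x k - x i) + δ‖ := by rw [add_sub_right_comm]
    _ ≤ ‖x k - x i‖ + ‖δ‖ := norm_add_le _ _
    _ ≤ diam (range x) + ‖δ‖ := by
      rw [← dist_eq_norm]
      gcongr
      exact dist_le_diam_of_mem (finite_range x).isBounded (mem_range_self k) (mem_range_self i)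

lemma lt_distFeatures_add {r : ℝ} {i : ι} (hsep : 2 * r < ‖x k - x i‖)
    (hδ : ‖δ‖ ≤ r) : r < distFeatures x (x k + δ) i := by
  have : ‖x k - x i‖ ≤ ‖x k + δ - x i‖ + ‖δ‖ := by
    simpa [add_sub_right_comm] using norm_sub_le (x k + δ - x i) δ
  simp only [distFeatures]
  linarith

end Features

variable [Fintype ι] [DecidableEq κ] [SeminormedAddCommGroup E]

theorem norm_distFeatures_sub_classWeight_lt {x : ι → E} {y : ι → κ} {r C : ℝ}
    (hsep : ∀ i j, y i ≠ y j → 2 * r < ‖x i - x j‖) (hC : diam (range x) + 2 * r < C)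
    {k : ι} {δ : E} (hδ : ‖δ‖ ≤ r) {j : κ} (hj : j ≠ y k) :
    ‖distFeatures x (x k + δ) - classWeight y C j‖ <
      ‖distFeatures x (x k + δ) - classWeight y C (y k)‖ := by
  have hr : 0 ≤ r := (norm_nonneg δ).trans hδ
  calc _ < C - r :=
        norm_sub_classWeight_lt (M := diam (range x) + r) hr (add_nonneg diam_nonneg hr)
          (by linarith) (fun i => norm_nonneg _)
          (fun i => (distFeatures_add_le i).trans (by gcongr))
          fun i hi => lt_distFeatures_add (hsep k i fun hki => hj (hi.symm.trans hki.symm)) hδ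
    _ ≤ _ := sub_le_norm_sub_classWeight (distFeatures_add_self.trans_le hδ)

end LinfDistNet

open LinfDistNet in
theorem exists_two_layer_linf_net_certified_robust_general
    (d K n : ℕ)
    (r : ℝ)
    (x : Fin n → (Fin d → ℝ)) (y : Fin n → Fin K)
    (hsep : ∀ i j : Fin n, y i ≠ y j → ‖x i - x j‖ > 2 * r) :
    ∃ (w1 : Fin n → (Fin d → ℝ)) (b1 : Fin n → ℝ)
      (w2 : Fin K → (Fin n → ℝ)) (b2 : Fin K → ℝ),
      ∀ k : Fin n, ∀ δ : Fin d → ℝ, ‖δ‖ ≤ r → ∀ j : Fin K, j ≠ y k →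
        ‖(fun i => ‖(x k + δ) - w1 i‖ + b1 i) - w2 (y k)‖ + b2 (y k) >
        ‖(fun i => ‖(x k + δ) - w1 i‖ + b1 i) - w2 j‖ + b2 j := by
  refine ⟨x, 0, classWeight y (diam (range x) + 2 * r + 1), 0, fun k δ hδ j hj => ?_⟩
  simp only [Pi.zero_apply, add_zero]
  exact norm_distFeatures_sub_classWeight_lt hsep (lt_add_one _) hδ hj

/-- Theorem 1 of the paper: for any r-separated dataset (w.r.t. ℓ∞), there exists a two-layer
ℓ∞-distance net `g(x)_j = ‖(‖x - w^(1,i)‖∞ + b^(1)_i)_{i∈[n]} - w^(2,j)‖∞ + b^(2)_j` with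
hidden width `n` that achieves 100% certified ℓ∞ robust accuracy on the dataset at
perturbation level `ε = r`: for every sample `k`, every `δ` with `‖δ‖∞ ≤ r`, and every label
`j ≠ y_k`, the net outputs `g(x_k + δ)_{y_k} > g(x_k + δ)_j`. -/
theorem exists_two_layer_linf_net_certified_robust
    (d K n : ℕ) (hn : 1 ≤ n) (hK : 1 ≤ K)
    (r : ℝ) (hr : 0 ≤ r)
    (x : Fin n → (Fin d → ℝ)) (y : Fin n → Fin K)
    (hsep : ∀ i j : Fin n, y i ≠ y j → ‖x i - x j‖ > 2 * r)
    (hsurj : ∀ j : Fin K, ∃ i : Fin n, y i = j) :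
    ∃ (w1 : Fin n → (Fin d → ℝ)) (b1 : Fin n → ℝ)
      (w2 : Fin K → (Fin n → ℝ)) (b2 : Fin K → ℝ),
      ∀ k : Fin n, ∀ δ : Fin d → ℝ, ‖δ‖ ≤ r → ∀ j : Fin K, j ≠ y k →
        ‖(fun i => ‖(x k + δ) - w1 i‖ + b1 i) - w2 (y k)‖ + b2 (y k) >
        ‖(fun i => ‖(x k + δ) - w1 i‖ + b1 i) - w2 j‖ + b2 j :=
  exists_two_layer_linf_net_certified_robust_general d K n r x y hsep
end

section
/- Let r ≥ 0 and let D = {(x_i, y_i)}_{i=1}^n (x_i ∈ ℝ^d, y_i ∈ [K]) be r-separated with respect to the ℓ∞-norm. Then for every k ∈ [n], every δ ∈ ℝ^d with ‖δ‖∞ ≤ r, and every label j ≠ y_k that is attained by some sample, one has min_{i : y_i = y_k} ‖(x_k + δ) − x_i‖∞ < min_{i : y_i = j} ‖(x_k + δ) − x_i‖∞; that is, the 1-nearest-neighbor classifier in the ℓ∞ metric classifies x_k + δ as y_k under every ℓ∞-perturbation of size at most r. -/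
/-! The perturbed point `x k + δ` lies within `r` of `x k`, so its distance to its own class is at
most `r`. By the triangle inequality it lies more than `2r - r = r` away from every sample of any
other class, and over a finite nonempty class the infimum is attained, hence also exceeds `r`. -/

theorem lt_norm_add_sub_of_two_mul_lt_norm_sub {E : Type*} [SeminormedAddCommGroup E]
    {a b δ : E} {r : ℝ} (hab : 2 * r < ‖a - b‖) (hδ : ‖δ‖ ≤ r) : r < ‖a + δ - b‖ := by
  have := norm_sub_le (a + δ - b) δ
  rw [show a + δ - b - δ = a - b by abel] at this
  linarith

theorem lt_ciInf_of_finite {ι α : Type*} [Finite ι] [Nonempty ι]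
    [ConditionallyCompleteLinearOrder α] {f : ι → α} {a : α} (h : ∀ i, a < f i) : a < ⨅ i, f i := by
  obtain ⟨i, hi⟩ := exists_eq_ciInf_of_finite (f := f)
  exact hi ▸ h i

theorem nearest_neighbor_classifier_robust_general
    (d K n : ℕ) (r : ℝ)
    (x : Fin n → (Fin d → ℝ)) (y : Fin n → Fin K)
    (hsep : ∀ i j : Fin n, y i ≠ y j → ‖x i - x j‖ > 2 * r) :
    ∀ k : Fin n, ∀ δ : Fin d → ℝ, ‖δ‖ ≤ r → ∀ j : Fin K, j ≠ y k →
      (∃ i : Fin n, y i = j) →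
      (⨅ i : {i : Fin n // y i = y k}, ‖(x k + δ) - x i.1‖) <
      (⨅ i : {i : Fin n // y i = j}, ‖(x k + δ) - x i.1‖) := by
  intro k δ hδ j hj ⟨i₀, hi₀⟩
  have : Nonempty {i : Fin n // y i = j} := ⟨⟨i₀, hi₀⟩⟩
  calc (⨅ i : {i : Fin n // y i = y k}, ‖(x k + δ) - x i.1‖)
      ≤ ‖(x k + δ) - x k‖ :=
        ciInf_le (Set.finite_range _).bddBelow (⟨k, rfl⟩ : {i : Fin n // y i = y k})
    _ = ‖δ‖ := by rw [add_sub_cancel_left]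
    _ ≤ r := hδ
    _ < ⨅ i : {i : Fin n // y i = j}, ‖(x k + δ) - x i.1‖ :=
      lt_ciInf_of_finite fun i =>
        lt_norm_add_sub_of_two_mul_lt_norm_sub (hsep k i fun h => hj (h.trans i.2).symm) hδ

/-- Robustness of the 1-nearest-neighbor ℓ∞ classifier on an r-separated dataset: for every
sample `k`, every perturbation `δ` with `‖δ‖∞ ≤ r`, and every label `j ≠ y_k` attained by some
sample, the nearest-neighbor distance of `x_k + δ` to class `y_k` is strictly smaller than its
nearest-neighbor distance to class `j`. -/
theorem nearest_neighbor_classifier_robust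
    (d K n : ℕ) (r : ℝ) (hr : 0 ≤ r)
    (x : Fin n → (Fin d → ℝ)) (y : Fin n → Fin K)
    (hsep : ∀ i j : Fin n, y i ≠ y j → ‖x i - x j‖ > 2 * r) :
    ∀ k : Fin n, ∀ δ : Fin d → ℝ, ‖δ‖ ≤ r → ∀ j : Fin K, j ≠ y k →
      (∃ i : Fin n, y i = j) →
      (⨅ i : {i : Fin n // y i = y k}, ‖(x k + δ) - x i.1‖) <
      (⨅ i : {i : Fin n // y i = j}, ‖(x k + δ) - x i.1‖) :=
  nearest_neighbor_classifier_robust_general d K n r x y hsep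
end

section
/- Let m ≥ 1, j ∈ [m], C > 0, and z ∈ ℝ^m with ‖z‖∞ ≤ C/2. Define w ∈ ℝ^m by w_j = −C and w_k = 0 for all k ≠ j. Then ‖z − w‖∞ − C = z_j; that is, a single ℓ∞-distance neuron with these parameters and bias b = −C exactly implements the coordinate-selection map z ↦ z_j on the domain {z : ‖z‖∞ ≤ C/2}. -/
/-! Shifting coordinate `j` by `c ≥ 2‖z‖∞` makes it dominant: `z_j + c ≥ c - ‖z‖∞ ≥ ‖z‖∞ ≥ |z_k|`
for every `k`, so the sup norm of the shifted vector is read off coordinate `j`. -/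

theorem pi_norm_add_single_of_two_mul_norm_le {ι : Type*} [Fintype ι] [DecidableEq ι]
    (z : ι → ℝ) (j : ι) {c : ℝ} (hc : 2 * ‖z‖ ≤ c) :
    ‖z + Pi.single j c‖ = z j + c := by
  have hzj : |z j| ≤ ‖z‖ := norm_le_pi_norm z j
  have hpos : 0 ≤ z j + c := by linarith [neg_abs_le (z j), norm_nonneg z]
  have hcoord_j : ‖(z + Pi.single j c : ι → ℝ) j‖ = z j + c := by
    simp [Real.norm_eq_abs, abs_of_nonneg hpos]
  apply le_antisymm
  · refine (pi_norm_le_iff_of_nonneg hpos).mpr fun k => ?_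
    rcases eq_or_ne k j with rfl | hkj
    · exact hcoord_j.le
    · have hzk : |z k| ≤ ‖z‖ := norm_le_pi_norm z k
      simp only [Pi.add_apply, Pi.single_eq_of_ne hkj, add_zero, Real.norm_eq_abs]
      linarith [neg_abs_le (z j)]
  · exact hcoord_j ▸ norm_le_pi_norm _ j

theorem linf_neuron_fetches_coordinate_general
    (m : ℕ) (j : Fin m)
    (C : ℝ)
    (z : Fin m → ℝ) (hz : ‖z‖ ≤ C / 2)
    (w : Fin m → ℝ) (hw : ∀ k : Fin m, w k = if k = j then -C else 0) :
    ‖z - w‖ - C = z j := by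
  have hw_single : w = -Pi.single j C := by
    ext k
    rw [hw k, Pi.neg_apply, Pi.single_apply]
    split_ifs <;> simp
  rw [hw_single, sub_neg_eq_add, pi_norm_add_single_of_two_mul_norm_le z j (by linarith)]
  ring

/-- Coordinate-fetching lemma (appendix of the paper): a single ℓ∞-distance neuron with
weight `w_j = -C`, `w_k = 0` for `k ≠ j`, and bias `-C` implements the coordinate-selection
map `z ↦ z_j` on the domain `{z : ‖z‖∞ ≤ C/2}`. -/
theorem linf_neuron_fetches_coordinate
    (m : ℕ) (hm : 1 ≤ m) (j : Fin m)
    (C : ℝ) (hC : 0 < C)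
    (z : Fin m → ℝ) (hz : ‖z‖ ≤ C / 2)
    (w : Fin m → ℝ) (hw : ∀ k : Fin m, w k = if k = j then -C else 0) :
    ‖z - w‖ - C = z j :=
  linf_neuron_fetches_coordinate_general m j C z hz w hw
end

section
/- Let d ≥ 1, m ≥ 0, C > 0, and let x, a ∈ ℝ^d and v ∈ ℝ^m satisfy ‖x − a‖∞ ≤ C and ‖v‖∞ ≤ C. Define z ∈ ℝ^{2d+m} by z_k = x_k and z_{d+k} = x_k for k ∈ [d], and z_{2d+k} = v_k for k ∈ [m]; define w ∈ ℝ^{2d+m} by w_k = a_k − C, w_{d+k} = a_k + C for k ∈ [d], and w_{2d+k} = 0 for k ∈ [m]. Then ‖z − w‖∞ − C = ‖x − a‖∞; that is, a single ℓ∞-distance neuron with parameters w and bias −C computes the ℓ∞-distance ‖x − a‖∞ from a hidden vector containing two copies of x together with any bounded auxiliary coordinates v. -/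
/-! On the first copy of `x` the neuron sees `x_k - a_k + C`, on the second `x_k - a_k - C`, and
`max |t + C| |t - C| = |t| + C`; the auxiliary coordinates are at most `C` and never win the
maximum. Hence `‖z - w‖∞ = ‖x - a‖∞ + C`. -/

/-- Both sides are the largest of the four sums `±a ± b`. -/
theorem max_abs_add_abs_sub {α : Type*} [AddCommGroup α] [LinearOrder α] [IsOrderedAddMonoid α]
    (a b : α) : max |a + b| |a - b| = |a| + |b| := by
  rw [abs_eq_max_neg (a := a), abs_eq_max_neg (a := b), abs_eq_max_neg, abs_eq_max_neg]
  grind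

theorem pi_norm_sumElim_add_sub {ι κ : Type*} [Fintype ι] [Nonempty ι] [Fintype κ]
    (y : ι → ℝ) (c : ℝ) (u : κ → ℝ) (hu : ‖u‖ ≤ c) :
    ‖Sum.elim (fun i ↦ y i + c) (Sum.elim (fun i ↦ y i - c) u)‖ = ‖y‖ + c := by
  set f := Sum.elim (fun i ↦ y i + c) (Sum.elim (fun i ↦ y i - c) u)
  have hc : 0 ≤ c := (norm_nonneg u).trans hu
  have hy : ∀ i, |y i| + |c| ≤ ‖y‖ + c := fun i ↦ by
    rw [abs_of_nonneg hc]
    exact add_le_add_left (norm_le_pi_norm y i) c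
  refine le_antisymm ?_ ?_
  · rw [pi_norm_le_iff_of_nonneg (by positivity)]
    rintro (i | i | i)
    · exact (abs_add_le _ _).trans (hy i)
    · exact (abs_sub _ _).trans (hy i)
    · exact ((norm_le_pi_norm u i).trans hu).trans (le_add_of_nonneg_left (norm_nonneg y))
  · obtain ⟨⟨i, hi⟩, -⟩ := IsGreatest.pi_norm y
    calc ‖y‖ + c = max |y i + c| |y i - c| := by
          rw [max_abs_add_abs_sub, abs_of_nonneg hc, ← hi]
          rfl
      _ ≤ _ := max_le (norm_le_pi_norm f (Sum.inl i)) (norm_le_pi_norm f (Sum.inr (Sum.inl i)))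

theorem linf_neuron_computes_distance_general
    (d m : ℕ) (hd : 1 ≤ d)
    (C : ℝ)
    (x a : Fin d → ℝ) (v : Fin m → ℝ)
    (hv : ‖v‖ ≤ C)
    (z w : (Fin d ⊕ Fin d ⊕ Fin m) → ℝ)
    (hz1 : ∀ k : Fin d, z (Sum.inl k) = x k)
    (hz2 : ∀ k : Fin d, z (Sum.inr (Sum.inl k)) = x k)
    (hz3 : ∀ k : Fin m, z (Sum.inr (Sum.inr k)) = v k)
    (hw1 : ∀ k : Fin d, w (Sum.inl k) = a k - C)
    (hw2 : ∀ k : Fin d, w (Sum.inr (Sum.inl k)) = a k + C)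
    (hw3 : ∀ k : Fin m, w (Sum.inr (Sum.inr k)) = 0) :
    ‖z - w‖ - C = ‖x - a‖ := by
  have : Nonempty (Fin d) := ⟨⟨0, hd⟩⟩
  have hzw : z - w = Sum.elim (fun k ↦ (x - a) k + C) (Sum.elim (fun k ↦ (x - a) k - C) v) := by
    funext k
    rcases k with k | k | k <;> simp only [Pi.sub_apply, Sum.elim_inl, Sum.elim_inr, *] <;> ring
  rw [hzw, pi_norm_sumElim_add_sub _ _ _ hv, add_sub_cancel_right]

/-- Distance-computation lemma (appendix of the paper): from a hidden vector `z` containing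
two copies of `x` together with bounded auxiliary coordinates `v` (indexed by
`Fin d ⊕ Fin d ⊕ Fin m ≅ Fin (2d + m)`), a single ℓ∞-distance neuron with weights
`w_k = a_k - C` on the first copy, `w_{d+k} = a_k + C` on the second copy, `0` on the
auxiliary coordinates, and bias `-C` computes `‖x - a‖∞`, provided `‖x - a‖∞ ≤ C` and
`‖v‖∞ ≤ C`. -/
theorem linf_neuron_computes_distance
    (d m : ℕ) (hd : 1 ≤ d)
    (C : ℝ) (hC : 0 < C)
    (x a : Fin d → ℝ) (v : Fin m → ℝ)
    (hxa : ‖x - a‖ ≤ C) (hv : ‖v‖ ≤ C)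
    (z w : (Fin d ⊕ Fin d ⊕ Fin m) → ℝ)
    (hz1 : ∀ k : Fin d, z (Sum.inl k) = x k)
    (hz2 : ∀ k : Fin d, z (Sum.inr (Sum.inl k)) = x k)
    (hz3 : ∀ k : Fin m, z (Sum.inr (Sum.inr k)) = v k)
    (hw1 : ∀ k : Fin d, w (Sum.inl k) = a k - C)
    (hw2 : ∀ k : Fin d, w (Sum.inr (Sum.inl k)) = a k + C)
    (hw3 : ∀ k : Fin m, w (Sum.inr (Sum.inr k)) = 0) :
    ‖z - w‖ - C = ‖x - a‖ :=
  linf_neuron_computes_distance_general d m hd C x a v hv z w hz1 hz2 hz3 hw1 hw2 hw3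
end

section
/- Let C > 0, n ≥ 1, let u ∈ ℝ satisfy −C/2 ≤ u ≤ 0, let v ∈ ℝ^n satisfy 0 ≤ v_i ≤ C/2 for all i ∈ [n], and let S ⊆ [n]. Define c_i = |v_i − C| for i ∈ S and c_i = v_i for i ∉ S. Then max( |u + C|, max_{i∈[n]} c_i ) − C = max( {u} ∪ { −v_i : i ∈ S } ); that is, a single ℓ∞-distance neuron (with weight −C on the coordinate carrying u, weight C on coordinates indexed by S, weight 0 elsewhere, and bias −C) implements the prefix-update u ↦ max{u, max_{i∈S}(−v_i)}. -/
/-!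
After subtracting the bias `C`, the term `|u + C|` becomes `u`, a coordinate `i ∈ S` becomes
exactly `-vᵢ` (as `vᵢ ≤ C`), and a coordinate `i ∉ S` becomes `vᵢ - C ≤ -C/2 ≤ u`, so it is
absorbed by `u` and does not affect the maximum.
-/

open Finset

theorem max_sup'_eq_max'_insert_image {ι α : Type*} [Fintype ι] [LinearOrder α]
    (f g : ι → α) (a : α) (S : Finset ι) (hne : (univ : Finset ι).Nonempty)
    (hS : ∀ i ∈ S, f i = g i) (hSc : ∀ i ∉ S, f i ≤ a) :
    max a (univ.sup' hne f) = (insert a (S.image g)).max' (insert_nonempty _ _) := by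
  set M := (insert a (S.image g)).max' (insert_nonempty _ _)
  have ha : a ≤ M := le_max' _ a (mem_insert_self _ _)
  refine le_antisymm (max_le ha (sup'_le _ _ fun i _ => ?_)) (max'_le _ _ _ fun y hy => ?_)
  · by_cases hi : i ∈ S
    · rw [hS i hi]
      exact le_max' _ _ (mem_insert_of_mem (mem_image_of_mem g hi))
    · exact (hSc i hi).trans ha
  · obtain rfl | ⟨i, hi, rfl⟩ := mem_insert.mp hy |>.imp_right mem_image.mp
    · exact le_max_left _ _
    · rw [← hS i hi]
      exact (le_sup' f (mem_univ i)).trans (le_max_right _ _)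

theorem linf_neuron_merging_step_general
    (C : ℝ)
    (n : ℕ) (hn : 1 ≤ n)
    (u : ℝ) (hu : -C / 2 ≤ u ∧ u ≤ 0)
    (v : Fin n → ℝ) (hv : ∀ i : Fin n, 0 ≤ v i ∧ v i ≤ C / 2)
    (S : Finset (Fin n))
    (c : Fin n → ℝ)
    (hc : ∀ i : Fin n, c i = if i ∈ S then |v i - C| else v i) :
    max |u + C| ((Finset.univ : Finset (Fin n)).sup' ⟨⟨0, hn⟩, Finset.mem_univ _⟩ c) - C =
      (insert u (S.image (fun i => -v i))).max' (Finset.insert_nonempty _ _) := by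
  obtain ⟨hu_lower, hu_upper⟩ := hu
  have hS : ∀ i ∈ S, c i - C = -v i := fun i hi => by
    rw [hc i, if_pos hi, abs_of_nonpos (by linarith [hv i])]
    ring
  have hSc : ∀ i ∉ S, c i - C ≤ u := fun i hi => by
    rw [hc i, if_neg hi]
    linarith [hv i]
  have hne : (univ : Finset (Fin n)).Nonempty := ⟨⟨0, hn⟩, mem_univ _⟩
  have hu' : |u + C| - C = u := by rw [abs_of_nonneg (by linarith), add_sub_cancel_right]
  have hsup : univ.sup' hne c - C = univ.sup' hne fun i => c i - C := by
    simpa only [sub_eq_add_neg] using sup'_add univ c (-C) hne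
  calc max |u + C| (univ.sup' _ c) - C = max (|u + C| - C) (univ.sup' hne c - C) :=
        (max_sub_sub_right _ _ _).symm
    _ = max u (univ.sup' hne fun i => c i - C) := by rw [hu', hsup]
    _ = _ := max_sup'_eq_max'_insert_image _ _ u S hne hS hSc

/-- Merging-step lemma (appendix of the paper): with `-C/2 ≤ u ≤ 0`, `0 ≤ vᵢ ≤ C/2`, and
`cᵢ = |vᵢ - C|` for `i ∈ S`, `cᵢ = vᵢ` otherwise, a single ℓ∞-distance neuron computes
`max(|u + C|, max_{i∈[n]} cᵢ) - C = max({u} ∪ {-vᵢ : i ∈ S})`, i.e. the prefix-update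
`u ↦ max{u, max_{i∈S}(-vᵢ)}`. -/
theorem linf_neuron_merging_step
    (C : ℝ) (hC : 0 < C)
    (n : ℕ) (hn : 1 ≤ n)
    (u : ℝ) (hu : -C / 2 ≤ u ∧ u ≤ 0)
    (v : Fin n → ℝ) (hv : ∀ i : Fin n, 0 ≤ v i ∧ v i ≤ C / 2)
    (S : Finset (Fin n))
    (c : Fin n → ℝ)
    (hc : ∀ i : Fin n, c i = if i ∈ S then |v i - C| else v i) :
    max |u + C| ((Finset.univ : Finset (Fin n)).sup' ⟨⟨0, hn⟩, Finset.mem_univ _⟩ c) - C =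
      (insert u (S.image (fun i => -v i))).max' (Finset.insert_nonempty _ _) :=
  linf_neuron_merging_step_general C n hn u hu v hv S c hc
end
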